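/- Let f : {-1,1}^n → ℝ, let p ∈ [0,1], let k ≥ 0, and let ρ = (S, y) be a random restriction with survival probability p. Then E_ρ[ Σ_{T ⊆ S, |T| > k} f̂_ρ(T)² ] = Σ_{V ⊆ [n]} Pr_S[ |V ∩ S| > k ]·f̂(V)², where Pr_S denotes the probability over the random alive set S in which each i ∈ [n] is included independently with probability p. -/
import Mathlib


open Finset

noncomputable section

/-- The ±1 value of a Boolean bit: `true ↦ 1`, `false ↦ -1`. -/
def sgnB (b : Bool) : ℝ := if b then 1 else -1

/-- The character `χ_S(x) = ∏_{i ∈ S} x_i` on the Boolean cube. -/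
def chiB {n : ℕ} (S : Finset (Fin n)) (x : Fin n → Bool) : ℝ := ∏ i ∈ S, sgnB (x i)

/-- Expectation over a uniformly random point of the cube `{-1,1}^n`. -/
def bexpect {n : ℕ} (f : (Fin n → Bool) → ℝ) : ℝ := (∑ x : Fin n → Bool, f x) / 2 ^ n

/-- The Fourier coefficient `f̂(S) = E_x [f(x) χ_S(x)]`. -/
def fCoeff {n : ℕ} (f : (Fin n → Bool) → ℝ) (S : Finset (Fin n)) : ℝ :=
  bexpect (fun x => f x * chiB S x)

/-- `f` has degree at most `d`: all Fourier coefficients above level `d` vanish. -/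
def degLE {n : ℕ} (f : (Fin n → Bool) → ℝ) (d : ℕ) : Prop :=
  ∀ S : Finset (Fin n), d < S.card → fCoeff f S = 0

/-- `Var[f] = Σ_{S ≠ ∅} f̂(S)²`. -/
def totalVar {n : ℕ} (f : (Fin n → Bool) → ℝ) : ℝ :=
  ∑ S ∈ univ.filter (fun S : Finset (Fin n) => S ≠ ∅), (fCoeff f S) ^ 2

/-- `Inf_j[f] = Σ_{S ∋ j} f̂(S)²`. -/
def influence {n : ℕ} (f : (Fin n → Bool) → ℝ) (j : Fin n) : ℝ :=
  ∑ S ∈ univ.filter (fun S : Finset (Fin n) => j ∈ S), (fCoeff f S) ^ 2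

/-- The restriction `f_ρ` for `ρ = (S, y)`: alive coordinates from `z`, dead ones from `y`.
(The restricted function is encoded as a function on the full cube which only depends on
the coordinates in `S`.) -/
def restrictFn {n : ℕ} (f : (Fin n → Bool) → ℝ) (S : Finset (Fin n)) (y : Fin n → Bool) :
    (Fin n → Bool) → ℝ :=
  fun z => f (fun i => if i ∈ S then z i else y i)

/-- Probability that the alive set of a random restriction with survival probability `p`
equals `S`. -/
def aliveProb {n : ℕ} (p : ℝ) (S : Finset (Fin n)) : ℝ :=
  p ^ S.card * (1 - p) ^ (n - S.card)

/-- Expectation over a random restriction `ρ = (S, y)` with survival probability `p`: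
each coordinate is alive independently with probability `p`, and dead coordinates get
independent uniform bits.  (`y` is sampled as a full uniform point of the cube; its values
on alive coordinates are irrelevant whenever the integrand ignores them.) -/
def rexpect {n : ℕ} (p : ℝ) (G : Finset (Fin n) → (Fin n → Bool) → ℝ) : ℝ :=
  ∑ S : Finset (Fin n), aliveProb p S * bexpect (fun y => G S y)

open Classical in
/-- Probability of an event under a random restriction with survival probability `p`. -/
def rprob {n : ℕ} (p : ℝ) (E : Finset (Fin n) → (Fin n → Bool) → Prop) : ℝ :=
  rexpect p (fun S y => if E S y then 1 else 0)

lemma sgnB_mul_self (b : Bool) : sgnB b * sgnB b = 1 := by cases b <;> simp [sgnB]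
lemma chiB_eq_prod_univ {n : ℕ} (S : Finset (Fin n)) (x : Fin n → Bool) :
    chiB S x = ∏ i : Fin n, (if i ∈ S then sgnB (x i) else 1) := by
  rw [chiB, Finset.prod_ite_mem, univ_inter]
lemma sum_chi_mul_chi {n : ℕ} (A B : Finset (Fin n)) :
    ∑ x : Fin n → Bool, chiB A x * chiB B x = if A = B then (2:ℝ)^n else 0 := by
  have h : ∀ x : Fin n → Bool, chiB A x * chiB B x
      = ∏ i : Fin n, ((if i ∈ A then sgnB (x i) else 1) * (if i ∈ B then sgnB (x i) else 1)) := by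
    intro x
    rw [chiB_eq_prod_univ, chiB_eq_prod_univ, Finset.prod_mul_distrib]
  simp only [h]
  rw [← Fintype.prod_sum (fun i b => (if i ∈ A then sgnB b else 1) * (if i ∈ B then sgnB b else 1))]
  have key : ∀ i : Fin n, (∑ b : Bool, (if i ∈ A then sgnB b else 1) * (if i ∈ B then sgnB b else 1))
      = if (i ∈ A ↔ i ∈ B) then 2 else 0 := by
    intro i
    by_cases hA : i ∈ A <;> by_cases hB : i ∈ B <;> simp [hA, hB, sgnB]; norm_num
  simp only [key]
  by_cases hAB : A = B
  · subst hAB; simp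
  · rw [if_neg hAB]
    obtain ⟨i, hi⟩ : ∃ i, ¬(i ∈ A ↔ i ∈ B) := by
      by_contra h'
      push_neg at h'
      exact hAB (Finset.ext fun i => (h' i))
    exact Finset.prod_eq_zero (mem_univ i) (by simp [hi])
lemma bexpect_chi_mul_chi {n : ℕ} (A B : Finset (Fin n)) :
    bexpect (fun x => chiB A x * chiB B x) = if A = B then 1 else 0 := by
  rw [bexpect, sum_chi_mul_chi]
  split <;> simp [div_self, pow_ne_zero]
lemma fourier_expansion {n : ℕ} (f : (Fin n → Bool) → ℝ) (x : Fin n → Bool) :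
    f x = ∑ V : Finset (Fin n), fCoeff f V * chiB V x := by
  have delta : ∀ x' : Fin n → Bool,
      ∑ V : Finset (Fin n), chiB V x' * chiB V x = if x' = x then (2:ℝ)^n else 0 := by
    intro x'
    have : ∀ V : Finset (Fin n), chiB V x' * chiB V x
        = (∏ i ∈ V, sgnB (x' i) * sgnB (x i)) * ∏ i ∈ Vᶜ, (1:ℝ) := by
      intro V; rw [chiB, chiB, ← Finset.prod_mul_distrib]; simp
    simp only [this]
    rw [← Fintype.prod_add (fun i => sgnB (x' i) * sgnB (x i)) (fun _ => (1:ℝ))]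
    have key : ∀ i : Fin n, sgnB (x' i) * sgnB (x i) + 1 = if x' i = x i then 2 else 0 := by
      intro i; cases hx : x' i <;> cases hy : x i <;> simp [sgnB] <;> norm_num
    simp only [key]
    by_cases hxx : x' = x
    · subst hxx; simp
    · rw [if_neg hxx]
      obtain ⟨i, hi⟩ : ∃ i, x' i ≠ x i := Function.ne_iff.mp hxx
      exact Finset.prod_eq_zero (mem_univ i) (by simp [hi])
  simp only [fCoeff, bexpect, Finset.sum_div, Finset.sum_mul, div_mul_eq_mul_div]
  rw [Finset.sum_comm]
  simp only [mul_assoc, ← Finset.mul_sum, ← Finset.sum_div]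
  simp only [delta, mul_ite, mul_zero]
  rw [Finset.sum_ite_eq' univ x (fun x' => f x' * (2:ℝ)^n)]
  simp [mul_div_assoc]
lemma bexpect_sum {n : ℕ} {α : Type*} (s : Finset α) (g : α → (Fin n → Bool) → ℝ) :
    bexpect (fun z => ∑ V ∈ s, g V z) = ∑ V ∈ s, bexpect (g V) := by
  simp only [bexpect]
  rw [← Finset.sum_div, Finset.sum_comm]
lemma bexpect_const_mul {n : ℕ} (c : ℝ) (g : (Fin n → Bool) → ℝ) :
    bexpect (fun z => c * g z) = c * bexpect g := by
  simp only [bexpect]; rw [← Finset.mul_sum, mul_div_assoc]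
lemma chiB_select {n : ℕ} (S V : Finset (Fin n)) (z y : Fin n → Bool) :
    chiB V (fun i => if i ∈ S then z i else y i) = chiB (V ∩ S) z * chiB (V \ S) y := by
  rw [chiB, chiB, chiB]
  rw [← Finset.prod_filter_mul_prod_filter_not V (· ∈ S)]
  congr 1
  · rw [Finset.filter_mem_eq_inter]
    exact Finset.prod_congr rfl fun i hi => by
      rw [Finset.mem_inter] at hi; simp [hi.2]
  · rw [← Finset.sdiff_eq_filter]
    exact Finset.prod_congr rfl fun i hi => by
      rw [Finset.mem_sdiff] at hi; simp [hi.2]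
lemma fCoeff_restrict {n : ℕ} (f : (Fin n → Bool) → ℝ) (S T : Finset (Fin n))
    (y : Fin n → Bool) :
    fCoeff (restrictFn f S y) T
      = ∑ V ∈ univ.filter (fun V => V ∩ S = T), fCoeff f V * chiB (V \ S) y := by
  have hexp : ∀ z, restrictFn f S y z
      = ∑ V : Finset (Fin n), fCoeff f V * (chiB (V ∩ S) z * chiB (V \ S) y) := by
    intro z
    rw [restrictFn, fourier_expansion f]
    exact Finset.sum_congr rfl fun V _ => by rw [chiB_select]
  conv_lhs => rw [fCoeff]
  simp only [hexp, Finset.sum_mul]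
  rw [bexpect_sum]
  rw [Finset.sum_filter]
  refine Finset.sum_congr rfl fun V _ => ?_
  have h1 : (fun z => fCoeff f V * (chiB (V ∩ S) z * chiB (V \ S) y) * chiB T z)
      = fun z => (fCoeff f V * chiB (V \ S) y) * (chiB (V ∩ S) z * chiB T z) := by
    funext z; ring
  rw [h1, bexpect_const_mul, bexpect_chi_mul_chi]
  split <;> simp
lemma restrict_eq_of_parts {n : ℕ} {S V W : Finset (Fin n)} (h1 : V ∩ S = W ∩ S)
    (h2 : V \ S = W \ S) : V = W := by
  ext i
  by_cases hi : i ∈ S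
  · constructor <;> intro hv
    · have : i ∈ W ∩ S := h1 ▸ (Finset.mem_inter.mpr ⟨hv, hi⟩)
      exact (Finset.mem_inter.mp this).1
    · have : i ∈ V ∩ S := h1 ▸ (Finset.mem_inter.mpr ⟨hv, hi⟩)
      exact (Finset.mem_inter.mp this).1
  · constructor <;> intro hv
    · have : i ∈ W \ S := h2 ▸ (Finset.mem_sdiff.mpr ⟨hv, hi⟩)
      exact (Finset.mem_sdiff.mp this).1
    · have : i ∈ V \ S := h2 ▸ (Finset.mem_sdiff.mpr ⟨hv, hi⟩)
      exact (Finset.mem_sdiff.mp this).1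
lemma bexpect_sq_restrict {n : ℕ} (S T : Finset (Fin n)) (a : Finset (Fin n) → ℝ) :
    bexpect (fun y => (∑ V ∈ univ.filter (fun V => V ∩ S = T), a V * chiB (V \ S) y) ^ 2)
      = ∑ V ∈ univ.filter (fun V => V ∩ S = T), (a V) ^ 2 := by
  set A := univ.filter (fun V : Finset (Fin n) => V ∩ S = T) with hA
  have hsq : ∀ y : Fin n → Bool, (∑ V ∈ A, a V * chiB (V \ S) y) ^ 2
      = ∑ V ∈ A, ∑ W ∈ A, (a V * a W) * (chiB (V \ S) y * chiB (W \ S) y) := by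
    intro y
    rw [sq, Finset.sum_mul_sum]
    exact Finset.sum_congr rfl fun V _ => Finset.sum_congr rfl fun W _ => by ring
  simp only [hsq]
  rw [bexpect_sum]
  refine Finset.sum_congr rfl fun V hV => ?_
  rw [bexpect_sum]
  rw [Finset.sum_eq_single_of_mem V hV]
  · rw [bexpect_const_mul, bexpect_chi_mul_chi, if_pos rfl, mul_one, sq]
  · intro W hW hne
    rw [bexpect_const_mul, bexpect_chi_mul_chi, if_neg, mul_zero]
    intro heq
    rw [hA, Finset.mem_filter] at hV hW
    exact hne (restrict_eq_of_parts (hW.2.trans hV.2.symm) heq.symm)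
lemma regroup {n : ℕ} (S : Finset (Fin n)) (k : ℕ) (g : Finset (Fin n) → ℝ) :
    ∑ T ∈ univ.filter (fun T : Finset (Fin n) => T ⊆ S ∧ k < T.card),
      ∑ V ∈ univ.filter (fun V : Finset (Fin n) => V ∩ S = T), g V
    = ∑ V ∈ univ.filter (fun V : Finset (Fin n) => k < (V ∩ S).card), g V := by
  rw [← Finset.sum_fiberwise_of_maps_to (g := fun V : Finset (Fin n) => V ∩ S)
    (t := univ.filter (fun T : Finset (Fin n) => T ⊆ S ∧ k < T.card))
    (fun V hV => by
      rw [Finset.mem_filter] at hV ⊢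
      exact ⟨mem_univ _, Finset.inter_subset_right, hV.2⟩) g]
  refine Finset.sum_congr rfl fun T hT => ?_
  rw [Finset.mem_filter] at hT
  rw [Finset.filter_filter]
  refine Finset.sum_congr ?_ fun _ _ => rfl
  ext V
  simp only [Finset.mem_filter, mem_univ, true_and]
  constructor
  · intro h; exact ⟨h ▸ hT.2.2, h⟩
  · intro h; exact h.2

/-- exact formula for the expected Fourier tail of a random
restriction. -/
theorem expected_tail_of_restriction (n : ℕ) (f : (Fin n → Bool) → ℝ) (p : ℝ)
    (hp : p ∈ Set.Icc (0:ℝ) 1) (k : ℕ) :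
    rexpect p (fun S y =>
        ∑ T ∈ univ.filter (fun T : Finset (Fin n) => T ⊆ S ∧ k < T.card),
          fCoeff (restrictFn f S y) T ^ 2) =
      ∑ V : Finset (Fin n),
        (∑ S ∈ univ.filter (fun S : Finset (Fin n) => k < (V ∩ S).card), aliveProb p S) *
          fCoeff f V ^ 2 := by
  rw [rexpect]
  have hS : ∀ S : Finset (Fin n),
      bexpect (fun y => ∑ T ∈ univ.filter (fun T : Finset (Fin n) => T ⊆ S ∧ k < T.card),
          fCoeff (restrictFn f S y) T ^ 2)
      = ∑ V ∈ univ.filter (fun V : Finset (Fin n) => k < (V ∩ S).card), fCoeff f V ^ 2 := by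
    intro S
    have h1 : (fun y => ∑ T ∈ univ.filter (fun T : Finset (Fin n) => T ⊆ S ∧ k < T.card),
          fCoeff (restrictFn f S y) T ^ 2)
        = fun y => ∑ T ∈ univ.filter (fun T : Finset (Fin n) => T ⊆ S ∧ k < T.card),
          (∑ V ∈ univ.filter (fun V => V ∩ S = T), fCoeff f V * chiB (V \ S) y) ^ 2 := by
      funext y
      exact Finset.sum_congr rfl fun T _ => by rw [fCoeff_restrict]
    rw [h1, bexpect_sum]
    rw [Finset.sum_congr rfl fun T _ => bexpect_sq_restrict S T (fCoeff f)]
    exact regroup S k (fun V => fCoeff f V ^ 2)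
  simp only [hS]
  simp only [Finset.sum_filter, Finset.mul_sum, mul_ite, mul_zero]
  rw [Finset.sum_comm]
  refine Finset.sum_congr rfl fun V _ => ?_
  rw [Finset.sum_mul]
  exact Finset.sum_congr rfl fun S _ => by split <;> simp
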